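/- arXiv:2410.14585 — 5 statements merged into one kernel-verified Lean document; each statement's English description precedes it below -/
import Mathlib

section
/- For all real numbers W and γ and all v > 0, the inequality (W − γ√v)² ≤ (γ² + W²·1_{γW<0})·v + (|γ| + √(γ² + W²))² holds, where 1_{γW<0} equals 1 if γW < 0 and 0 otherwise. -/
/-! Write `s = √v`, so `v = s²`. The cross term `-2γWs` of `(W - γs)²` is nonpositive when
`γW ≥ 0`; otherwise AM-GM bounds it by `γ² + W²s²`, which is where the extra `W²v` comes from.
In both cases what remains is at most `γ² + W² = (√(γ² + W²))² ≤ (|γ| + √(γ² + W²))²`. -/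

lemma sub_mul_sq_le_of_mul_nonneg {W γ s : ℝ} (h : 0 ≤ γ * W * s) :
    (W - γ * s) ^ 2 ≤ γ ^ 2 * s ^ 2 + (γ ^ 2 + W ^ 2) := by
  nlinarith [sq_nonneg γ]

lemma sub_mul_sq_le (W γ s : ℝ) :
    (W - γ * s) ^ 2 ≤ (γ ^ 2 + W ^ 2) * s ^ 2 + (γ ^ 2 + W ^ 2) := by
  nlinarith [sq_nonneg (γ + W * s)]

lemma add_sq_le_sq_abs_add_sqrt (γ W : ℝ) :
    γ ^ 2 + W ^ 2 ≤ (|γ| + Real.sqrt (γ ^ 2 + W ^ 2)) ^ 2 := by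
  have hsq : Real.sqrt (γ ^ 2 + W ^ 2) ^ 2 = γ ^ 2 + W ^ 2 := Real.sq_sqrt (by positivity)
  nlinarith [abs_nonneg γ, Real.sqrt_nonneg (γ ^ 2 + W ^ 2)]

/-- For all real `W`, `γ` and all `v > 0`,
`(W − γ√v)² ≤ (γ² + W²·1_{γW<0})·v + (|γ| + √(γ² + W²))²`. -/
theorem garch2f_scalar_inequality (W γ v : ℝ) (hv : 0 < v) :
    (W - γ * Real.sqrt v) ^ 2 ≤
      (γ ^ 2 + W ^ 2 * (if γ * W < 0 then (1 : ℝ) else 0)) * v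
        + (|γ| + Real.sqrt (γ ^ 2 + W ^ 2)) ^ 2 := by
  have hsum := add_sq_le_sq_abs_add_sqrt γ W
  split_ifs with hneg
  · have hsq := sub_mul_sq_le W γ (Real.sqrt v)
    rw [Real.sq_sqrt hv.le] at hsq
    linarith
  · have hsq := sub_mul_sq_le_of_mul_nonneg
      (mul_nonneg (not_lt.mp hneg) (Real.sqrt_nonneg v))
    rw [Real.sq_sqrt hv.le] at hsq
    linarith
end

section
/- Under Assumption 1, for every x = (x₁,x₂) with x₁,x₂ ≥ 0 and every W = (W₁,W₂) ∈ ℝ², one has the entrywise (componentwise) inequality F(x,W) ≤ ω + (B + b(W))·x + α·f(W), and consequently ‖F(x,W)‖₂ ≤ ‖ω + (B + b(W))·x + α·f(W)‖₂, where ‖·‖₂ is the Euclidean norm on ℝ². -/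
/-!
Since `B + b(W) = β + α · diag(γⱼ² + Wⱼ² 1_{γⱼWⱼ<0})` and `α ≥ 0`, the entrywise bound reduces to
the scalar inequality `(w - γ√x)² ≤ (γ² + w² 1_{γw<0}) x + γ² + w²` in each coordinate: the cross
term `-2γw√x` is nonpositive unless `γw < 0`, and then it is at most `w²x + γ²` by AM-GM.
Finally `γ² + w² ≤ (|γ| + √(γ² + w²))²`. The norm bound holds because `F(x,W) ≥ 0`
entrywise and the Euclidean norm is monotone on the nonnegative orthant.
-/

open Matrix

/-- Euclidean (`L²`) norm on `ℝ²`. -/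
noncomputable def euclNorm2 (y : Fin 2 → ℝ) : ℝ := ‖(WithLp.equiv 2 (Fin 2 → ℝ)).symm y‖

/-- One-step GARCH-2F variance map
`F(x,W) = ω + β·x + α·((W₁ − γ₁√x₁)², (W₂ − γ₂√x₂)²)ᵀ`. -/
noncomputable def garchF (ω : Fin 2 → ℝ) (β α : Matrix (Fin 2) (Fin 2) ℝ) (γ : Fin 2 → ℝ)
    (x W : Fin 2 → ℝ) : Fin 2 → ℝ :=
  ω + β.mulVec x +
    α.mulVec ![(W 0 - γ 0 * Real.sqrt (x 0)) ^ 2, (W 1 - γ 1 * Real.sqrt (x 1)) ^ 2]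

/-- Autoregressive matrix `B`. -/
def garchB (β α : Matrix (Fin 2) (Fin 2) ℝ) (γ : Fin 2 → ℝ) : Matrix (Fin 2) (Fin 2) ℝ :=
  !![β 0 0 + α 0 0 * γ 0 ^ 2, β 0 1 + α 0 1 * γ 1 ^ 2;
     β 1 0 + α 1 0 * γ 0 ^ 2, β 1 1 + α 1 1 * γ 1 ^ 2]

/-- The random matrix `b(W)`. -/
noncomputable def garchb (α : Matrix (Fin 2) (Fin 2) ℝ) (γ W : Fin 2 → ℝ) : Matrix (Fin 2) (Fin 2) ℝ :=
  !![α 0 0 * W 0 ^ 2 * (if γ 0 * W 0 < 0 then 1 else 0),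
     α 0 1 * W 1 ^ 2 * (if γ 1 * W 1 < 0 then 1 else 0);
     α 1 0 * W 0 ^ 2 * (if γ 0 * W 0 < 0 then 1 else 0),
     α 1 1 * W 1 ^ 2 * (if γ 1 * W 1 < 0 then 1 else 0)]

/-- The random vector `f(W)`. -/
noncomputable def garchf (γ W : Fin 2 → ℝ) : Fin 2 → ℝ :=
  ![(|γ 0| + Real.sqrt (γ 0 ^ 2 + W 0 ^ 2)) ^ 2,
    (|γ 1| + Real.sqrt (γ 1 ^ 2 + W 1 ^ 2)) ^ 2]

lemma le_sq_add_sqrt {a t : ℝ} (ha : 0 ≤ a) (ht : 0 ≤ t) : t ≤ (a + √t) ^ 2 :=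
  calc t = √t ^ 2 := (Real.sq_sqrt ht).symm
    _ ≤ (a + √t) ^ 2 := by gcongr; exact le_add_of_nonneg_left ha

lemma sq_sub_mul_le {γ w s : ℝ} (hs : 0 ≤ s) :
    (w - γ * s) ^ 2 ≤ (γ ^ 2 + w ^ 2 * (if γ * w < 0 then 1 else 0)) * s ^ 2 + (γ ^ 2 + w ^ 2) := by
  split_ifs with h
  · nlinarith [sq_nonneg (w * s + γ)]
  · nlinarith [mul_nonneg (not_lt.mp h) hs]

lemma sq_sub_mul_sqrt_le {γ w x : ℝ} (hx : 0 ≤ x) :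
    (w - γ * √x) ^ 2 ≤
      (γ ^ 2 + w ^ 2 * (if γ * w < 0 then 1 else 0)) * x + (|γ| + √(γ ^ 2 + w ^ 2)) ^ 2 := by
  calc (w - γ * √x) ^ 2
      ≤ (γ ^ 2 + w ^ 2 * (if γ * w < 0 then 1 else 0)) * √x ^ 2 + (γ ^ 2 + w ^ 2) :=
        sq_sub_mul_le (Real.sqrt_nonneg x)
    _ ≤ _ := by
        rw [Real.sq_sqrt hx]
        gcongr
        exact le_sq_add_sqrt (abs_nonneg γ) (by positivity)

namespace Matrix

variable {m n : Type*} [Fintype n]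

lemma mulVec_mono_of_nonneg {A : Matrix m n ℝ} (hA : ∀ i j, 0 ≤ A i j) {u v : n → ℝ}
    (huv : u ≤ v) : A *ᵥ u ≤ A *ᵥ v :=
  fun i => dotProduct_le_dotProduct_of_nonneg_left huv (hA i)

lemma mulVec_nonneg_of_nonneg {A : Matrix m n ℝ} (hA : ∀ i j, 0 ≤ A i j) {v : n → ℝ}
    (hv : 0 ≤ v) : 0 ≤ A *ᵥ v :=
  fun i => dotProduct_nonneg_of_nonneg (hA i) hv

end Matrix

lemma norm_toLp_le_of_nonneg_of_le {ι : Type*} [Fintype ι] {u v : ι → ℝ} (hu : 0 ≤ u)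
    (huv : u ≤ v) :
    ‖(WithLp.equiv 2 (ι → ℝ)).symm u‖ ≤ ‖(WithLp.equiv 2 (ι → ℝ)).symm v‖ := by
  rw [EuclideanSpace.norm_eq, EuclideanSpace.norm_eq]
  gcongr with i
  simp only [WithLp.equiv_symm_apply, WithLp.ofLp_toLp, Real.norm_eq_abs]
  exact abs_le_abs_of_nonneg (hu i) (huv i)

noncomputable def garchLeverage (γ W : Fin 2 → ℝ) : Fin 2 → ℝ :=
  fun j => γ j ^ 2 + W j ^ 2 * if γ j * W j < 0 then 1 else 0

section GARCH

variable (ω γ : Fin 2 → ℝ) (β α : Matrix (Fin 2) (Fin 2) ℝ) (x W : Fin 2 → ℝ)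

lemma garchB_add_garchb :
    garchB β α γ + garchb α γ W = β + α * diagonal (garchLeverage γ W) := by
  ext i j
  fin_cases i <;> fin_cases j <;>
    simp only [garchB, garchb, garchLeverage, Matrix.add_apply, mul_diagonal, of_apply, cons_val',
      cons_val_zero, cons_val_one, cons_val_fin_one, Fin.zero_eta, Fin.mk_one, Fin.isValue] <;>
    split_ifs <;> ring

lemma garchF_eq :
    garchF ω β α γ x W = ω + β *ᵥ x + α *ᵥ fun j => (W j - γ j * √(x j)) ^ 2 := by
  unfold garchF
  congr
  ext j
  fin_cases j <;> rfl

lemma garchf_apply (j : Fin 2) : garchf γ W j = (|γ j| + √(γ j ^ 2 + W j ^ 2)) ^ 2 := by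
  fin_cases j <;> rfl

variable {ω γ β α x W}

lemma garchF_le (hα : ∀ i j, 0 ≤ α i j) (hx : 0 ≤ x) :
    garchF ω β α γ x W ≤
      ω + (garchB β α γ + garchb α γ W) *ᵥ x + α *ᵥ garchf γ W := by
  have hshock : (fun j => (W j - γ j * √(x j)) ^ 2) ≤
      diagonal (garchLeverage γ W) *ᵥ x + garchf γ W := fun j => by
    rw [Pi.add_apply, mulVec_diagonal, garchf_apply]
    exact sq_sub_mul_sqrt_le (hx j)
  calc garchF ω β α γ x W = ω + β *ᵥ x + α *ᵥ fun j => (W j - γ j * √(x j)) ^ 2 :=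
        garchF_eq ω γ β α x W
    _ ≤ ω + β *ᵥ x + α *ᵥ (diagonal (garchLeverage γ W) *ᵥ x + garchf γ W) := by
        gcongr
        exact mulVec_mono_of_nonneg hα hshock
    _ = ω + (garchB β α γ + garchb α γ W) *ᵥ x + α *ᵥ garchf γ W := by
        rw [garchB_add_garchb, add_mulVec, ← mulVec_mulVec, mulVec_add]
        abel

lemma garchF_nonneg (hω : 0 ≤ ω) (hβ : ∀ i j, 0 ≤ β i j) (hα : ∀ i j, 0 ≤ α i j)
    (hx : 0 ≤ x) : 0 ≤ garchF ω β α γ x W := by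
  rw [garchF_eq]
  have hβx := mulVec_nonneg_of_nonneg hβ hx
  have hαs := mulVec_nonneg_of_nonneg hα fun j => sq_nonneg (W j - γ j * √(x j))
  positivity

end GARCH

theorem garch2f_entrywise_bound_general (ω γ : Fin 2 → ℝ) (β α : Matrix (Fin 2) (Fin 2) ℝ)
    (hω : ∀ i, 0 < ω i) (hβ : ∀ i j, 0 ≤ β i j) (hα : ∀ i j, 0 ≤ α i j)
    (x W : Fin 2 → ℝ) (hx : ∀ i, 0 ≤ x i) :
    (∀ i, garchF ω β α γ x W i ≤
        (ω + (garchB β α γ + garchb α γ W).mulVec x + α.mulVec (garchf γ W)) i) ∧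
      euclNorm2 (garchF ω β α γ x W) ≤
        euclNorm2 (ω + (garchB β α γ + garchb α γ W).mulVec x + α.mulVec (garchf γ W)) := by
  have hle : garchF ω β α γ x W ≤ _ := garchF_le hα hx
  exact ⟨hle, norm_toLp_le_of_nonneg_of_le (garchF_nonneg (fun i => (hω i).le) hβ hα hx) hle⟩

/-- Lemma 2 of the paper: under Assumption 1, for every `x ≥ 0` entrywise and
every `W ∈ ℝ²`, `F(x,W) ≤ ω + (B + b(W))·x + α·f(W)` entrywise, and consequently
`‖F(x,W)‖₂ ≤ ‖ω + (B + b(W))·x + α·f(W)‖₂`. -/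
theorem garch2f_entrywise_bound (ω γ : Fin 2 → ℝ) (β α : Matrix (Fin 2) (Fin 2) ℝ)
    (hω : ∀ i, 0 < ω i) (hβ : ∀ i j, 0 ≤ β i j) (hα : ∀ i j, 0 ≤ α i j)
    (hα1 : 0 < α 0 0 + α 0 1) (hα2 : 0 < α 1 0 + α 1 1)
    (hβ1 : 0 < β 0 0 + β 0 1) (hβ2 : 0 < β 1 0 + β 1 1)
    (x W : Fin 2 → ℝ) (hx : ∀ i, 0 ≤ x i) :
    (∀ i, garchF ω β α γ x W i ≤
        (ω + (garchB β α γ + garchb α γ W).mulVec x + α.mulVec (garchf γ W)) i) ∧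
      euclNorm2 (garchF ω β α γ x W) ≤
        euclNorm2 (ω + (garchB β α γ + garchb α γ W).mulVec x + α.mulVec (garchf γ W)) :=
  garch2f_entrywise_bound_general ω γ β α hω hβ hα x W hx
end

section
/- Fix real numbers r, λ, Λ. For independent standard normal random variables Z₁, Z₂ and v₁, v₂ > 0, set R = r + λ(v₁+v₂) + √v₁·Z₁ + √v₂·Z₂. Then the no-arbitrage (martingale) condition E[ e^{R} · e^{Λ(√v₁Z₁ + √v₂Z₂)} ] / E[ e^{Λ(√v₁Z₁ + √v₂Z₂)} ] = e^{r} holds for all choices of v₁, v₂ > 0 if and only if Λ = −λ − 1/2. -/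
open MeasureTheory ProbabilityTheory Real

/-! Under the Esscher-type change of measure with density `e^{ΛX} / E[e^{ΛX}]`, where
`X = √v₁ Z₁ + √v₂ Z₂ ~ N(0, v₁ + v₂)`, the expectation of `e^R` is a ratio of two values of the
Gaussian moment generating function `t ↦ e^{(v₁+v₂) t² / 2}`, namely
`e^{r + λ(v₁+v₂)} · e^{(v₁+v₂)((Λ+1)² - Λ²)/2} = e^{r + (v₁+v₂)(λ + Λ + 1/2)}`.
This equals `e^r` for some (equivalently, all) `v₁ + v₂ > 0` exactly when `Λ = -λ - 1/2`. -/

section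

variable {Ω : Type*} [MeasurableSpace Ω] {μ : Measure Ω}

lemma integral_exp_add_mul_exp_mul (X : Ω → ℝ) (c Λ : ℝ) :
    ∫ ω, exp (c + X ω) * exp (Λ * X ω) ∂μ = exp c * mgf X μ (Λ + 1) := by
  rw [mgf, ← integral_const_mul]
  congr with ω
  rw [← exp_add, ← exp_add]
  ring_nf

lemma mgf_mul_add_mul_of_indepFun {Z₁ Z₂ : Ω → ℝ} {m₁ m₂ : ℝ} {v₁ v₂ : NNReal}
    (hindep : IndepFun Z₁ Z₂ μ) (hlaw₁ : μ.map Z₁ = gaussianReal m₁ v₁)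
    (hlaw₂ : μ.map Z₂ = gaussianReal m₂ v₂) (a b t : ℝ) :
    mgf (fun ω ↦ a * Z₁ ω + b * Z₂ ω) μ t
      = exp ((a * m₁ + b * m₂) * t + (a ^ 2 * v₁ + b ^ 2 * v₂) * t ^ 2 / 2) := by
  have hZ₁ : AEMeasurable Z₁ μ := aemeasurable_of_map_neZero (by rw [hlaw₁]; infer_instance)
  have hZ₂ : AEMeasurable Z₂ μ := aemeasurable_of_map_neZero (by rw [hlaw₂]; infer_instance)
  have hindep' : IndepFun (fun ω ↦ a * Z₁ ω) (fun ω ↦ b * Z₂ ω) μ :=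
    hindep.comp (measurable_const_mul a) (measurable_const_mul b)
  rw [show (fun ω ↦ a * Z₁ ω + b * Z₂ ω) = (fun ω ↦ a * Z₁ ω) + (fun ω ↦ b * Z₂ ω) from rfl,
    hindep'.mgf_add' (hZ₁.const_mul a).aestronglyMeasurable
      (hZ₂.const_mul b).aestronglyMeasurable,
    mgf_const_mul, mgf_const_mul, mgf_gaussianReal hlaw₁, mgf_gaussianReal hlaw₂, ← exp_add]
  ring_nf

lemma integral_exp_mul_exp_div_integral_exp {Z₁ Z₂ : Ω → ℝ} (hindep : IndepFun Z₁ Z₂ μ)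
    (hlaw₁ : μ.map Z₁ = gaussianReal 0 1) (hlaw₂ : μ.map Z₂ = gaussianReal 0 1) (c a b Λ : ℝ) :
    (∫ ω, exp (c + a * Z₁ ω + b * Z₂ ω) * exp (Λ * (a * Z₁ ω + b * Z₂ ω)) ∂μ) /
        (∫ ω, exp (Λ * (a * Z₁ ω + b * Z₂ ω)) ∂μ)
      = exp (c + (a ^ 2 + b ^ 2) * (Λ + 1 / 2)) := by
  simp_rw [add_assoc c]
  rw [integral_exp_add_mul_exp_mul (fun ω ↦ a * Z₁ ω + b * Z₂ ω), ← mgf,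
    mgf_mul_add_mul_of_indepFun hindep hlaw₁ hlaw₂, mgf_mul_add_mul_of_indepFun hindep hlaw₁ hlaw₂,
    mul_div_assoc, ← exp_sub, ← exp_add]
  congr 1
  push_cast
  ring

end

theorem martingale_condition_iff_Lambda_general
    {Ω : Type*} [MeasurableSpace Ω] (μ : Measure Ω)
    (Z₁ Z₂ : Ω → ℝ)
    (hlaw₁ : μ.map Z₁ = gaussianReal 0 1) (hlaw₂ : μ.map Z₂ = gaussianReal 0 1)
    (hindep : IndepFun Z₁ Z₂ μ)
    (r lam Λ : ℝ) :
    (∀ v₁ v₂ : ℝ, 0 < v₁ → 0 < v₂ →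
        (∫ ωp, Real.exp (r + lam * (v₁ + v₂)
              + Real.sqrt v₁ * Z₁ ωp + Real.sqrt v₂ * Z₂ ωp)
            * Real.exp (Λ * (Real.sqrt v₁ * Z₁ ωp + Real.sqrt v₂ * Z₂ ωp)) ∂μ) /
          (∫ ωp, Real.exp (Λ * (Real.sqrt v₁ * Z₁ ωp + Real.sqrt v₂ * Z₂ ωp)) ∂μ) =
          Real.exp r) ↔
      Λ = -lam - 1 / 2 := by
  have key : ∀ v₁ v₂ : ℝ, 0 < v₁ → 0 < v₂ →
      (∫ ωp, exp (r + lam * (v₁ + v₂) + √v₁ * Z₁ ωp + √v₂ * Z₂ ωp)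
          * exp (Λ * (√v₁ * Z₁ ωp + √v₂ * Z₂ ωp)) ∂μ) /
        (∫ ωp, exp (Λ * (√v₁ * Z₁ ωp + √v₂ * Z₂ ωp)) ∂μ)
        = exp (r + (v₁ + v₂) * (lam + Λ + 1 / 2)) := by
    intro v₁ v₂ hv₁ hv₂
    rw [integral_exp_mul_exp_div_integral_exp hindep hlaw₁ hlaw₂, sq_sqrt hv₁.le,
      sq_sqrt hv₂.le]
    congr 1
    ring
  constructor
  · intro h
    have h₁ := exp_injective ((key 1 1 one_pos one_pos).symm.trans (h 1 1 one_pos one_pos))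
    linarith
  · intro hΛ v₁ v₂ hv₁ hv₂
    rw [key v₁ v₂ hv₁ hv₂, hΛ]
    congr 1
    ring

/-- Proposition 3 of the paper: with `Z₁, Z₂` independent standard normals and
`R = r + λ(v₁+v₂) + √v₁Z₁ + √v₂Z₂`, the martingale condition
`E[e^R·e^{Λ(√v₁Z₁+√v₂Z₂)}] / E[e^{Λ(√v₁Z₁+√v₂Z₂)}] = e^r` holds for all `v₁, v₂ > 0`
if and only if `Λ = −λ − 1/2`. -/
theorem martingale_condition_iff_Lambda
    {Ω : Type*} [MeasurableSpace Ω] (μ : Measure Ω) [IsProbabilityMeasure μ]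
    (Z₁ Z₂ : Ω → ℝ) (hZ₁ : Measurable Z₁) (hZ₂ : Measurable Z₂)
    (hlaw₁ : μ.map Z₁ = gaussianReal 0 1) (hlaw₂ : μ.map Z₂ = gaussianReal 0 1)
    (hindep : IndepFun Z₁ Z₂ μ)
    (r lam Λ : ℝ) :
    (∀ v₁ v₂ : ℝ, 0 < v₁ → 0 < v₂ →
        (∫ ωp, Real.exp (r + lam * (v₁ + v₂)
              + Real.sqrt v₁ * Z₁ ωp + Real.sqrt v₂ * Z₂ ωp)
            * Real.exp (Λ * (Real.sqrt v₁ * Z₁ ωp + Real.sqrt v₂ * Z₂ ωp)) ∂μ) /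
          (∫ ωp, Real.exp (Λ * (Real.sqrt v₁ * Z₁ ωp + Real.sqrt v₂ * Z₂ ωp)) ∂μ) =
          Real.exp r) ↔
      Λ = -lam - 1 / 2 :=
  martingale_condition_iff_Lambda_general μ Z₁ Z₂ hlaw₁ hlaw₂ hindep r lam Λ
end

section
/- Let Z₁, Z₂ be independent standard normal random variables; let v₁, v₂ > 0, γ₁ ≠ 0, γ₂ ≠ 0, and let φ, λ, r, ω₁, ω₂, β₁₁, β₁₂, β₂₁, β₂₂, α₁₁, α₁₂, α₂₁, α₂₂, A', B₁', B₂' be real numbers with 2(α₁₁B₁' + α₂₁B₂') < 1 and 2(α₁₂B₁' + α₂₂B₂') < 1. Define v₁⁺ = ω₁ + β₁₁v₁ + β₁₂v₂ + α₁₁(Z₁ − γ₁√v₁)² + α₁₂(Z₂ − γ₂√v₂)² and v₂⁺ = ω₂ + β₂₁v₁ + β₂₂v₂ + α₂₁(Z₁ − γ₁√v₁)² + α₂₂(Z₂ − γ₂√v₂)². Then E[ exp( φ(r + λ(v₁+v₂) + √v₁Z₁ + √v₂Z₂) + A' + B₁'·v₁⁺ + B₂'·v₂⁺ ) ] = exp(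 A + B₁·v₁ + B₂·v₂ ), where A = A' + φr + B₁'ω₁ + B₂'ω₂ − (1/2)log(1 − 2(α₁₁B₁' + α₂₁B₂')) − (1/2)log(1 − 2(α₁₂B₁' + α₂₂B₂')), B₁ = φλ + (β₁₁ + α₁₁γ₁²)B₁' + (β₂₁ + α₂₁γ₁²)B₂' + 2γ₁²(φ/(2γ₁) − α₁₁B₁' − α₂₁B₂')² / (1 − 2(α₁₁B₁' + α₂₁B₂')), and B₂ = φλ + (β₂₂ + α₂₂γ₂²)B₂' + (β₁₂ + α₁₂γ₂²)B₁' + 2γ₂²(φ/(2γ₂) − α₂₂B₂' − α₁₂B₁')² / (1 − 2(α₂₂B₂' + α₁₂B₁')). -/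
/-! Expanding the squares `(Zᵢ - γᵢ√vᵢ)²`, the exponent becomes
`c + (q₁ Z₁² + p₁ Z₁) + (q₂ Z₂² + p₂ Z₂)` with `q₁ = α₁₁B₁' + α₂₁B₂'`, `p₁ = (φ - 2γ₁q₁)√v₁`
and symmetrically for the second factor. By independence the expectation factors, and completing
the square against the standard normal density gives
`E[exp (q Z² + p Z)] = (1 - 2q)^(-1/2) exp (p² / (2(1 - 2q)))` for `2q < 1`.
Collecting the terms constant, linear in `v₁` and linear in `v₂` yields `A`, `B₁` and `B₂`. -/

open MeasureTheory ProbabilityTheory Real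

theorem integral_exp_mul_sq_add_mul {b : ℝ} (hb : b ≠ 0) (c : ℝ) :
    ∫ x, exp (b * x ^ 2 + c * x) = √(π / -b) * exp (-c ^ 2 / (4 * b)) := by
  have hsq (x : ℝ) :
      exp (b * x ^ 2 + c * x) = exp (-c ^ 2 / (4 * b)) * exp (-(-b) * (x + c / (2 * b)) ^ 2) := by
    rw [← exp_add]
    congr 1
    field_simp
    ring
  simp_rw [hsq]
  rw [integral_const_mul, integral_add_right_eq_self (fun x ↦ exp (-(-b) * x ^ 2)),
    integral_gaussian, mul_comm]

theorem integral_exp_quadratic_gaussianReal {q : ℝ} (hq : 2 * q < 1) (p : ℝ) :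
    ∫ x, exp (q * x ^ 2 + p * x) ∂gaussianReal 0 1 =
      exp (p ^ 2 / (2 * (1 - 2 * q)) - log (1 - 2 * q) / 2) := by
  have hpos : 0 < 1 - 2 * q := by linarith
  have hne : q - 1 / 2 ≠ 0 := by linarith
  have hdensity (x : ℝ) : gaussianPDFReal 0 1 x • exp (q * x ^ 2 + p * x) =
      (√(2 * π))⁻¹ * exp ((q - 1 / 2) * x ^ 2 + p * x) := by
    rw [gaussianPDFReal, smul_eq_mul, mul_assoc, ← exp_add]
    push_cast
    ring_nf
  simp_rw [integral_gaussianReal_eq_integral_smul one_ne_zero, hdensity]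
  have hvar : π / -(q - 1 / 2) = 2 * π / (1 - 2 * q) := by
    rw [div_eq_div_iff (by linarith) hpos.ne']; ring
  have hexponent : -p ^ 2 / (4 * (q - 1 / 2)) = p ^ 2 / (2 * (1 - 2 * q)) := by
    rw [div_eq_div_iff (by linarith) (by linarith)]; ring
  rw [integral_const_mul, integral_exp_mul_sq_add_mul hne p, hvar, hexponent,
    sqrt_div' _ hpos.le, exp_sub, exp_half, exp_log hpos]
  field_simp

theorem integral_exp_quadratic_of_indepFun_stdGaussian {Ω : Type*} [MeasurableSpace Ω]
    {μ : Measure Ω} {Z₁ Z₂ : Ω → ℝ} (hZ₁ : AEMeasurable Z₁ μ) (hZ₂ : AEMeasurable Z₂ μ)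
    (hlaw₁ : μ.map Z₁ = gaussianReal 0 1) (hlaw₂ : μ.map Z₂ = gaussianReal 0 1)
    (hindep : IndepFun Z₁ Z₂ μ) {q₁ q₂ : ℝ} (hq₁ : 2 * q₁ < 1) (hq₂ : 2 * q₂ < 1)
    (c p₁ p₂ : ℝ) :
    ∫ ω, exp (c + (q₁ * Z₁ ω ^ 2 + p₁ * Z₁ ω) + (q₂ * Z₂ ω ^ 2 + p₂ * Z₂ ω)) ∂μ =
      exp (c + (p₁ ^ 2 / (2 * (1 - 2 * q₁)) - log (1 - 2 * q₁) / 2)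
        + (p₂ ^ 2 / (2 * (1 - 2 * q₂)) - log (1 - 2 * q₂) / 2)) := by
  have hmeas (q p : ℝ) : Measurable fun x : ℝ ↦ exp (q * x ^ 2 + p * x) := by fun_prop
  have hsplit (a b : ℝ) : exp (c + a + b) = exp c * (exp a * exp b) := by
    rw [exp_add, exp_add, mul_assoc]
  simp_rw [hsplit, integral_const_mul]
  rw [hindep.integral_fun_comp_mul_comp hZ₁ hZ₂ (hmeas q₁ p₁).aestronglyMeasurable
      (hmeas q₂ p₂).aestronglyMeasurable, ← integral_map hZ₁ (hmeas q₁ p₁).aestronglyMeasurable,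
    ← integral_map hZ₂ (hmeas q₂ p₂).aestronglyMeasurable, hlaw₁, hlaw₂,
    integral_exp_quadratic_gaussianReal hq₁, integral_exp_quadratic_gaussianReal hq₂]

theorem sq_mul_sqrt_div_eq {γ : ℝ} (hγ : γ ≠ 0) {v : ℝ} (hv : 0 ≤ v) (φ q : ℝ) :
    ((φ - 2 * γ * q) * √v) ^ 2 / (2 * (1 - 2 * q)) =
      2 * γ ^ 2 * (φ / (2 * γ) - q) ^ 2 / (1 - 2 * q) * v := by
  rw [mul_pow, sq_sqrt hv]
  field_simp

theorem garch2f_mgf_recursion_general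
    {Ω : Type*} [MeasurableSpace Ω] (μ : Measure Ω)
    (Z₁ Z₂ : Ω → ℝ) (hZ₁ : Measurable Z₁) (hZ₂ : Measurable Z₂)
    (hlaw₁ : μ.map Z₁ = gaussianReal 0 1) (hlaw₂ : μ.map Z₂ = gaussianReal 0 1)
    (hindep : IndepFun Z₁ Z₂ μ)
    (v₁ v₂ : ℝ) (hv₁ : 0 < v₁) (hv₂ : 0 < v₂)
    (γ₁ γ₂ : ℝ) (hγ₁ : γ₁ ≠ 0) (hγ₂ : γ₂ ≠ 0)
    (φ lam r ω₁ ω₂ β₁₁ β₁₂ β₂₁ β₂₂ α₁₁ α₁₂ α₂₁ α₂₂ A' B₁' B₂' A B₁ B₂ : ℝ)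
    (hden₁ : 2 * (α₁₁ * B₁' + α₂₁ * B₂') < 1)
    (hden₂ : 2 * (α₁₂ * B₁' + α₂₂ * B₂') < 1)
    (hA : A = A' + φ * r + B₁' * ω₁ + B₂' * ω₂
        - 1 / 2 * Real.log (1 - 2 * (α₁₁ * B₁' + α₂₁ * B₂'))
        - 1 / 2 * Real.log (1 - 2 * (α₁₂ * B₁' + α₂₂ * B₂')))
    (hB₁ : B₁ = φ * lam + (β₁₁ + α₁₁ * γ₁ ^ 2) * B₁' + (β₂₁ + α₂₁ * γ₁ ^ 2) * B₂'
        + 2 * γ₁ ^ 2 * (φ / (2 * γ₁) - α₁₁ * B₁' - α₂₁ * B₂') ^ 2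
            / (1 - 2 * (α₁₁ * B₁' + α₂₁ * B₂')))
    (hB₂ : B₂ = φ * lam + (β₂₂ + α₂₂ * γ₂ ^ 2) * B₂' + (β₁₂ + α₁₂ * γ₂ ^ 2) * B₁'
        + 2 * γ₂ ^ 2 * (φ / (2 * γ₂) - α₂₂ * B₂' - α₁₂ * B₁') ^ 2
            / (1 - 2 * (α₂₂ * B₂' + α₁₂ * B₁'))) :
    (∫ ωp, Real.exp (φ * (r + lam * (v₁ + v₂)
          + Real.sqrt v₁ * Z₁ ωp + Real.sqrt v₂ * Z₂ ωp)
        + A'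
        + B₁' * (ω₁ + β₁₁ * v₁ + β₁₂ * v₂
            + α₁₁ * (Z₁ ωp - γ₁ * Real.sqrt v₁) ^ 2
            + α₁₂ * (Z₂ ωp - γ₂ * Real.sqrt v₂) ^ 2)
        + B₂' * (ω₂ + β₂₁ * v₁ + β₂₂ * v₂
            + α₂₁ * (Z₁ ωp - γ₁ * Real.sqrt v₁) ^ 2
            + α₂₂ * (Z₂ ωp - γ₂ * Real.sqrt v₂) ^ 2)) ∂μ) =
      Real.exp (A + B₁ * v₁ + B₂ * v₂) := by
  set q₁ := α₁₁ * B₁' + α₂₁ * B₂'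
  set q₂ := α₁₂ * B₁' + α₂₂ * B₂'
  set c := φ * r + φ * lam * (v₁ + v₂) + A' + B₁' * (ω₁ + β₁₁ * v₁ + β₁₂ * v₂)
    + B₂' * (ω₂ + β₂₁ * v₁ + β₂₂ * v₂) + q₁ * γ₁ ^ 2 * v₁ + q₂ * γ₂ ^ 2 * v₂
  calc _ = ∫ ω, exp (c + (q₁ * Z₁ ω ^ 2 + (φ - 2 * γ₁ * q₁) * √v₁ * Z₁ ω)
          + (q₂ * Z₂ ω ^ 2 + (φ - 2 * γ₂ * q₂) * √v₂ * Z₂ ω)) ∂μ := by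
        congr! 3 with ω
        linear_combination (q₁ * γ₁ ^ 2) * sq_sqrt hv₁.le + (q₂ * γ₂ ^ 2) * sq_sqrt hv₂.le
    _ = _ := integral_exp_quadratic_of_indepFun_stdGaussian hZ₁.aemeasurable hZ₂.aemeasurable
          hlaw₁ hlaw₂ hindep hden₁ hden₂ _ _ _
    _ = exp (A + B₁ * v₁ + B₂ * v₂) := by
        rw [sq_mul_sqrt_div_eq hγ₁ hv₁.le, sq_mul_sqrt_div_eq hγ₂ hv₂.le, hA, hB₁, hB₂]
        congr 1
        simp only [c, q₁, q₂]
        ring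

/-- equations (eq_coeff_rico): one-step recursion for the exponentially affine
conditional moment generating function of the GARCH-2F log-price. -/
theorem garch2f_mgf_recursion
    {Ω : Type*} [MeasurableSpace Ω] (μ : Measure Ω) [IsProbabilityMeasure μ]
    (Z₁ Z₂ : Ω → ℝ) (hZ₁ : Measurable Z₁) (hZ₂ : Measurable Z₂)
    (hlaw₁ : μ.map Z₁ = gaussianReal 0 1) (hlaw₂ : μ.map Z₂ = gaussianReal 0 1)
    (hindep : IndepFun Z₁ Z₂ μ)
    (v₁ v₂ : ℝ) (hv₁ : 0 < v₁) (hv₂ : 0 < v₂)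
    (γ₁ γ₂ : ℝ) (hγ₁ : γ₁ ≠ 0) (hγ₂ : γ₂ ≠ 0)
    (φ lam r ω₁ ω₂ β₁₁ β₁₂ β₂₁ β₂₂ α₁₁ α₁₂ α₂₁ α₂₂ A' B₁' B₂' A B₁ B₂ : ℝ)
    (hden₁ : 2 * (α₁₁ * B₁' + α₂₁ * B₂') < 1)
    (hden₂ : 2 * (α₁₂ * B₁' + α₂₂ * B₂') < 1)
    (hA : A = A' + φ * r + B₁' * ω₁ + B₂' * ω₂
        - 1 / 2 * Real.log (1 - 2 * (α₁₁ * B₁' + α₂₁ * B₂'))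
        - 1 / 2 * Real.log (1 - 2 * (α₁₂ * B₁' + α₂₂ * B₂')))
    (hB₁ : B₁ = φ * lam + (β₁₁ + α₁₁ * γ₁ ^ 2) * B₁' + (β₂₁ + α₂₁ * γ₁ ^ 2) * B₂'
        + 2 * γ₁ ^ 2 * (φ / (2 * γ₁) - α₁₁ * B₁' - α₂₁ * B₂') ^ 2
            / (1 - 2 * (α₁₁ * B₁' + α₂₁ * B₂')))
    (hB₂ : B₂ = φ * lam + (β₂₂ + α₂₂ * γ₂ ^ 2) * B₂' + (β₁₂ + α₁₂ * γ₂ ^ 2) * B₁'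
        + 2 * γ₂ ^ 2 * (φ / (2 * γ₂) - α₂₂ * B₂' - α₁₂ * B₁') ^ 2
            / (1 - 2 * (α₂₂ * B₂' + α₁₂ * B₁'))) :
    (∫ ωp, Real.exp (φ * (r + lam * (v₁ + v₂)
          + Real.sqrt v₁ * Z₁ ωp + Real.sqrt v₂ * Z₂ ωp)
        + A'
        + B₁' * (ω₁ + β₁₁ * v₁ + β₁₂ * v₂
            + α₁₁ * (Z₁ ωp - γ₁ * Real.sqrt v₁) ^ 2
            + α₁₂ * (Z₂ ωp - γ₂ * Real.sqrt v₂) ^ 2)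
        + B₂' * (ω₂ + β₂₁ * v₁ + β₂₂ * v₂
            + α₂₁ * (Z₁ ωp - γ₁ * Real.sqrt v₁) ^ 2
            + α₂₂ * (Z₂ ωp - γ₂ * Real.sqrt v₂) ^ 2)) ∂μ) =
      Real.exp (A + B₁ * v₁ + B₂ * v₂) :=
  garch2f_mgf_recursion_general μ Z₁ Z₂ hZ₁ hZ₂ hlaw₁ hlaw₂ hindep v₁ v₂ hv₁ hv₂ γ₁ γ₂ hγ₁ hγ₂ φ lam
    r ω₁ ω₂ β₁₁ β₁₂ β₂₁ β₂₂ α₁₁ α₁₂ α₂₁ α₂₂ A' B₁' B₂' A B₁ B₂ hden₁ hden₂ hA hB₁ hB₂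
end

section
/- Fix real numbers r, λ and v₁, v₂ > 0. Let Z₁, Z₂ be independent standard normal random variables under a probability measure P, set Λ = −λ − 1/2, and let Q be the probability measure with density dQ/dP = e^{Λ(√v₁Z₁+√v₂Z₂)} / E_P[e^{Λ(√v₁Z₁+√v₂Z₂)}]. Then under Q the random variables Z*₁ = Z₁ − Λ√v₁ and Z*₂ = Z₂ − Λ√v₂ are independent standard normal, and the return R = r + λ(v₁+v₂) + √v₁Z₁ + √v₂Z₂ satisfies R = r − (1/2)(v₁+v₂) + √v₁Z*₁ + √v₂Z*₂; moreover, for any γ₁, γ₂ ∈ ℝ, Z₁ − γ₁√v₁ = Z*₁ − γ*₁√v₁ and Z₂ − γ₂√v₂ = Z*₂ − γ*₂√v₂ with γ*₁ = γ₁ + λ + 1/2 and γ*₂ = γ₂ + λ + 1/2. -/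
/-!
Under `P` the pair `(Z₁, Z₂)` has law `N(0,1) ⊗ N(0,1)`, and `Q` is the exponential tilt of `P`
by `a Z₁ + b Z₂` with `a = Λ√v₁`, `b = Λ√v₂`. Tilting commutes with taking laws, tilting a product
measure by a sum of functions of the separate coordinates tilts each factor, and tilting `N(μ, v)`
by `x ↦ t x` gives `N(μ + v t, v)` (completing the square). So under `Q` the pair has law
`N(a,1) ⊗ N(b,1)`, i.e. `Z₁ - a` and `Z₂ - b` are independent standard normal. The identities for
the return and the leverage parameters are algebra, using `√vᵢ * √vᵢ = vᵢ`.
-/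

open MeasureTheory ProbabilityTheory

open scoped NNReal

namespace MeasureTheory.Measure

variable {α β : Type*} {mα : MeasurableSpace α} {mβ : MeasurableSpace β}

lemma tilted_map {μ : Measure α} {T : α → β} (hT : Measurable T) {g : β → ℝ}
    (hg : Measurable g) : (μ.map T).tilted g = (μ.tilted (g ∘ T)).map T := by
  ext s hs
  rw [map_apply hT hs, tilted_apply' _ _ hs, tilted_apply' _ _ (hT hs),
    setLIntegral_map hs (by fun_prop) hT, integral_map hT.aemeasurable (by fun_prop)]
  rfl

lemma tilted_prod {μ : Measure α} {ν : Measure β} [SFinite μ] [SFinite ν] {f : α → ℝ}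
    {g : β → ℝ} (hf : AEMeasurable f μ) (hg : AEMeasurable g ν) :
    (μ.prod ν).tilted (fun z ↦ f z.1 + g z.2) = (μ.tilted f).prod (ν.tilted g) := by
  rw [tilted, tilted, tilted, prod_withDensity₀ (by fun_prop) (by fun_prop)]
  congr with z
  simp_rw [Real.exp_add]
  rw [integral_prod_mul (fun x ↦ Real.exp (f x)) (fun y ↦ Real.exp (g y)),
    ← ENNReal.ofReal_mul (by positivity), mul_div_mul_comm]

end MeasureTheory.Measure

namespace ProbabilityTheory

lemma gaussianPDFReal_mul_exp_mul (μ : ℝ) {v : ℝ≥0} (hv : v ≠ 0) (t x : ℝ) :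
    gaussianPDFReal μ v x * Real.exp (t * x) =
      Real.exp (μ * t + v * t ^ 2 / 2) * gaussianPDFReal (μ + v * t) v x := by
  simp only [gaussianPDFReal]
  rw [mul_left_comm, mul_assoc, ← Real.exp_add, ← Real.exp_add]
  congr 2
  have : (v : ℝ) ≠ 0 := by exact_mod_cast hv
  field_simp
  ring

lemma gaussianReal_tilted_mul (μ : ℝ) (v : ℝ≥0) (t : ℝ) :
    (gaussianReal μ v).tilted (fun x ↦ t * x) = gaussianReal (μ + v * t) v := by
  obtain rfl | hv := eq_or_ne v 0
  · simp [Measure.tilted, dirac_withDensity]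
  have hmgf : ∫ x, Real.exp (t * x) ∂gaussianReal μ v = Real.exp (μ * t + v * t ^ 2 / 2) :=
    congrFun (mgf_fun_id_gaussianReal (μ := μ) (v := v)) t
  rw [Measure.tilted, hmgf, gaussianReal_of_var_ne_zero _ hv, gaussianReal_of_var_ne_zero _ hv,
    ← withDensity_mul _ (measurable_gaussianPDF μ v) (by fun_prop)]
  congr with x
  rw [Pi.mul_apply, gaussianPDF, gaussianPDF, ← ENNReal.ofReal_mul (gaussianPDFReal_nonneg _ _ _),
    mul_div_assoc', gaussianPDFReal_mul_exp_mul μ hv, mul_div_cancel_left₀ _ (Real.exp_pos _).ne']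

variable {Ω 𝓧 𝓨 : Type*} {mΩ : MeasurableSpace Ω} {m𝓧 : MeasurableSpace 𝓧}
  {m𝓨 : MeasurableSpace 𝓨} {P : Measure Ω} {X : Ω → 𝓧} {Y : Ω → 𝓨} {μ : Measure 𝓧}
  {ν : Measure 𝓨}

lemma HasLaw.tilted (hX : HasLaw X μ P) (hXm : Measurable X) {g : 𝓧 → ℝ} (hg : Measurable g) :
    HasLaw X (μ.tilted g) (P.tilted (g ∘ X)) where
  aemeasurable := hXm.aemeasurable
  map_eq := by rw [← hX.map_eq, Measure.tilted_map hXm hg]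

lemma hasLaw_prodMk_prod_iff [IsProbabilityMeasure μ] [IsProbabilityMeasure ν] :
    HasLaw (fun ω ↦ (X ω, Y ω)) (μ.prod ν) P ↔ HasLaw X μ P ∧ HasLaw Y ν P ∧ X ⟂ᵢ[P] Y := by
  refine ⟨fun h ↦ ?_, fun ⟨hX, hY, hXY⟩ ↦ ?_⟩
  · have := h.isProbabilityMeasure
    have hX : HasLaw X μ P := measurePreserving_fst.comp_hasLaw h
    have hY : HasLaw Y ν P := measurePreserving_snd.comp_hasLaw h
    exact ⟨hX, hY, (indepFun_iff_hasLaw_prodMk_prod hX hY).2 h⟩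
  · have := hX.isProbabilityMeasure
    exact hXY.hasLaw_prod hX hY

end ProbabilityTheory

theorem garch2f_risk_neutralization_general
    {Ω : Type*} [MeasurableSpace Ω] (P : Measure Ω)
    (Z₁ Z₂ : Ω → ℝ) (hZ₁ : Measurable Z₁) (hZ₂ : Measurable Z₂)
    (hlaw₁ : P.map Z₁ = gaussianReal 0 1) (hlaw₂ : P.map Z₂ = gaussianReal 0 1)
    (hindep : IndepFun Z₁ Z₂ P)
    (r lam v₁ v₂ : ℝ) (hv₁ : 0 < v₁) (hv₂ : 0 < v₂)
    (Λ : ℝ) (hΛ : Λ = -lam - 1 / 2)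
    (Q : Measure Ω)
    (hQ : Q = P.withDensity fun ωp =>
        ENNReal.ofReal
          (Real.exp (Λ * (Real.sqrt v₁ * Z₁ ωp + Real.sqrt v₂ * Z₂ ωp)) /
            ∫ ωq, Real.exp (Λ * (Real.sqrt v₁ * Z₁ ωq + Real.sqrt v₂ * Z₂ ωq)) ∂P)) :
    Q.map (fun ωp => Z₁ ωp - Λ * Real.sqrt v₁) = gaussianReal 0 1 ∧
    Q.map (fun ωp => Z₂ ωp - Λ * Real.sqrt v₂) = gaussianReal 0 1 ∧
    IndepFun (fun ωp => Z₁ ωp - Λ * Real.sqrt v₁)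
      (fun ωp => Z₂ ωp - Λ * Real.sqrt v₂) Q ∧
    (∀ ωp, r + lam * (v₁ + v₂) + Real.sqrt v₁ * Z₁ ωp + Real.sqrt v₂ * Z₂ ωp =
      r - 1 / 2 * (v₁ + v₂) + Real.sqrt v₁ * (Z₁ ωp - Λ * Real.sqrt v₁)
        + Real.sqrt v₂ * (Z₂ ωp - Λ * Real.sqrt v₂)) ∧
    (∀ γ₁ : ℝ, ∀ ωp, Z₁ ωp - γ₁ * Real.sqrt v₁ =
      (Z₁ ωp - Λ * Real.sqrt v₁) - (γ₁ + lam + 1 / 2) * Real.sqrt v₁) ∧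
    (∀ γ₂ : ℝ, ∀ ωp, Z₂ ωp - γ₂ * Real.sqrt v₂ =
      (Z₂ ωp - Λ * Real.sqrt v₂) - (γ₂ + lam + 1 / 2) * Real.sqrt v₂) := by
  set a := Λ * Real.sqrt v₁
  set b := Λ * Real.sqrt v₂
  have hP : HasLaw (fun ω ↦ (Z₁ ω, Z₂ ω)) ((gaussianReal 0 1).prod (gaussianReal 0 1)) P :=
    hasLaw_prodMk_prod_iff.2 ⟨⟨hZ₁.aemeasurable, hlaw₁⟩, ⟨hZ₂.aemeasurable, hlaw₂⟩, hindep⟩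
  have hQ_tilted : Q = P.tilted ((fun z : ℝ × ℝ ↦ a * z.1 + b * z.2) ∘ fun ω ↦ (Z₁ ω, Z₂ ω)) := by
    rw [hQ, Measure.tilted]
    congr! with ω <;> simp only [Function.comp_apply, a, b] <;> ring
  have hQ_law : HasLaw (fun ω ↦ (Z₁ ω, Z₂ ω)) ((gaussianReal a 1).prod (gaussianReal b 1)) Q := by
    have hg : Measurable fun z : ℝ × ℝ ↦ a * z.1 + b * z.2 := by fun_prop
    have h := hP.tilted (hZ₁.prodMk hZ₂) hg
    rwa [Measure.tilted_prod (by fun_prop) (by fun_prop), gaussianReal_tilted_mul,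
      gaussianReal_tilted_mul, ← hQ_tilted, NNReal.coe_one, one_mul, one_mul, zero_add,
      zero_add] at h
  obtain ⟨hQ₁, hQ₂, hQ_indep⟩ := hasLaw_prodMk_prod_iff.1 hQ_law
  have hs₁ : Real.sqrt v₁ * Real.sqrt v₁ = v₁ := Real.mul_self_sqrt hv₁.le
  have hs₂ : Real.sqrt v₂ * Real.sqrt v₂ = v₂ := Real.mul_self_sqrt hv₂.le
  refine ⟨by simpa using (gaussianReal_sub_const hQ₁ a).map_eq,
    by simpa using (gaussianReal_sub_const hQ₂ b).map_eq,
    hQ_indep.comp (measurable_sub_const a) (measurable_sub_const b), fun ω ↦ ?_,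
    fun γ ω ↦ by simp only [a, hΛ]; ring, fun γ ω ↦ by simp only [b, hΛ]; ring⟩
  simp only [a, b, hΛ]
  linear_combination (-(lam + 1 / 2)) * hs₁ + (-(lam + 1 / 2)) * hs₂

/-- Proposition 4, one time step: with `Λ = −λ − 1/2` and `Q` the measure with
density `dQ/dP = e^{Λ(√v₁Z₁+√v₂Z₂)} / E_P[e^{Λ(√v₁Z₁+√v₂Z₂)}]`, the shifted innovations
`Z*ᵢ = Zᵢ − Λ√vᵢ` are independent standard normal under `Q`; the return
`R = r + λ(v₁+v₂) + √v₁Z₁ + √v₂Z₂` equals `r − (1/2)(v₁+v₂) + √v₁Z*₁ + √v₂Z*₂`; and for any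
`γ₁, γ₂`, `Zᵢ − γᵢ√vᵢ = Z*ᵢ − γ*ᵢ√vᵢ` with `γ*ᵢ = γᵢ + λ + 1/2`. -/
theorem garch2f_risk_neutralization
    {Ω : Type*} [MeasurableSpace Ω] (P : Measure Ω) [IsProbabilityMeasure P]
    (Z₁ Z₂ : Ω → ℝ) (hZ₁ : Measurable Z₁) (hZ₂ : Measurable Z₂)
    (hlaw₁ : P.map Z₁ = gaussianReal 0 1) (hlaw₂ : P.map Z₂ = gaussianReal 0 1)
    (hindep : IndepFun Z₁ Z₂ P)
    (r lam v₁ v₂ : ℝ) (hv₁ : 0 < v₁) (hv₂ : 0 < v₂)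
    (Λ : ℝ) (hΛ : Λ = -lam - 1 / 2)
    (Q : Measure Ω)
    (hQ : Q = P.withDensity fun ωp =>
        ENNReal.ofReal
          (Real.exp (Λ * (Real.sqrt v₁ * Z₁ ωp + Real.sqrt v₂ * Z₂ ωp)) /
            ∫ ωq, Real.exp (Λ * (Real.sqrt v₁ * Z₁ ωq + Real.sqrt v₂ * Z₂ ωq)) ∂P)) :
    Q.map (fun ωp => Z₁ ωp - Λ * Real.sqrt v₁) = gaussianReal 0 1 ∧
    Q.map (fun ωp => Z₂ ωp - Λ * Real.sqrt v₂) = gaussianReal 0 1 ∧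
    IndepFun (fun ωp => Z₁ ωp - Λ * Real.sqrt v₁)
      (fun ωp => Z₂ ωp - Λ * Real.sqrt v₂) Q ∧
    (∀ ωp, r + lam * (v₁ + v₂) + Real.sqrt v₁ * Z₁ ωp + Real.sqrt v₂ * Z₂ ωp =
      r - 1 / 2 * (v₁ + v₂) + Real.sqrt v₁ * (Z₁ ωp - Λ * Real.sqrt v₁)
        + Real.sqrt v₂ * (Z₂ ωp - Λ * Real.sqrt v₂)) ∧
    (∀ γ₁ : ℝ, ∀ ωp, Z₁ ωp - γ₁ * Real.sqrt v₁ =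
      (Z₁ ωp - Λ * Real.sqrt v₁) - (γ₁ + lam + 1 / 2) * Real.sqrt v₁) ∧
    (∀ γ₂ : ℝ, ∀ ωp, Z₂ ωp - γ₂ * Real.sqrt v₂ =
      (Z₂ ωp - Λ * Real.sqrt v₂) - (γ₂ + lam + 1 / 2) * Real.sqrt v₂) :=
  garch2f_risk_neutralization_general P Z₁ Z₂ hZ₁ hZ₂ hlaw₁ hlaw₂ hindep r lam v₁ v₂ hv₁ hv₂ Λ hΛ Q
    hQ
end
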